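/- arXiv:2601.16441 — 8 statements merged into one kernel-verified Lean document; each statement's English description precedes it below -/
import Mathlib

section
/- Let W be a linear subspace of a symplectic vector space (V, ω) with ω-compatible complex structure J and associated inner product g. Define W₊^θ to be the g-orthogonal complement of W ∩ JW inside the g-orthogonal complement of W₀ = W∩W^ω in W, and W₋^θ the analogous subspace of W^ω. Then W₊^θ ∩ W₋^θ = {0}. -/
/-- The symplectic complement `W^ω = {v | ω v w = 0 for all w ∈ W}`. -/
def sympCompl {V : Type*} [AddCommGroup V] [Module ℝ V]
    (ω : V →ₗ[ℝ] V →ₗ[ℝ] ℝ) (W : Submodule ℝ V) : Submodule ℝ V where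
  carrier := {v | ∀ w ∈ W, ω v w = 0}
  add_mem' := by
    intro a b ha hb w hw
    simp only [Set.mem_setOf_eq] at ha hb
    simp [ha w hw, hb w hw]
  zero_mem' := by intro w hw; simp
  smul_mem' := by
    intro c a ha w hw
    simp only [Set.mem_setOf_eq] at ha
    simp [ha w hw]

/-- The `g`-orthogonal complement of a subspace, where `g u v = ω u (J v)`. -/
def gOrtho {V : Type*} [AddCommGroup V] [Module ℝ V]
    (ω : V →ₗ[ℝ] V →ₗ[ℝ] ℝ) (J : V →ₗ[ℝ] V) (U : Submodule ℝ V) : Submodule ℝ V where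
  carrier := {v | ∀ u ∈ U, ω v (J u) = 0}
  add_mem' := by
    intro a b ha hb u hu
    simp only [Set.mem_setOf_eq] at ha hb
    simp [ha u hu, hb u hu]
  zero_mem' := by intro u hu; simp
  smul_mem' := by
    intro c a ha u hu
    simp only [Set.mem_setOf_eq] at ha
    simp [ha u hu]

/-- The totally real parts `W₊^θ` of `W` and `W₋^θ` of `W^ω` intersect
trivially. Here `W₊^θ` is the `g`-orthogonal complement of `W ∩ JW` inside the
`g`-orthogonal complement of `W₀ = W ∩ W^ω` in `W`, and `W₋^θ` is the analogous
subspace of `W^ω`. -/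
theorem totally_real_parts_trivial_intersection {V : Type*} [AddCommGroup V] [Module ℝ V]
    [FiniteDimensional ℝ V]
    (ω : V →ₗ[ℝ] V →ₗ[ℝ] ℝ)
    (halt : ∀ v, ω v v = 0)
    (hnd : ∀ v, (∀ w, ω v w = 0) → v = 0)
    (J : V →ₗ[ℝ] V)
    (hJ2 : ∀ v, J (J v) = -v)
    (hJω : ∀ u v, ω (J u) (J v) = ω u v)
    (hJpos : ∀ v, v ≠ 0 → 0 < ω v (J v))
    (W : Submodule ℝ V) :
    (W ⊓ gOrtho ω J (W ⊓ sympCompl ω W) ⊓ gOrtho ω J (W ⊓ Submodule.map J W)) ⊓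
      (sympCompl ω W ⊓ gOrtho ω J (W ⊓ sympCompl ω W) ⊓
        gOrtho ω J (sympCompl ω W ⊓ Submodule.map J (sympCompl ω W))) = ⊥ := by
  rw [eq_bot_iff]
  intro x hx
  simp only [Submodule.mem_inf] at hx
  obtain ⟨⟨⟨hxW, hxO⟩, -⟩, ⟨hxS, -⟩, -⟩ := hx
  have h := hxO x (Submodule.mem_inf.mpr ⟨hxW, hxS⟩)
  by_contra hne
  simp only [Submodule.mem_bot] at hne
  exact absurd h (ne_of_gt (hJpos x hne))
end

section
/- Let W be a linear subspace of a symplectic vector space V with ω-compatible complex structure J. The totally real symplectic parts of W and of W^ω have the same dimension: dim W₊^θ = dim W₋^θ, where W₊^θ is the g-orthogonal complement of W₀ ⊕ (W∩JW) in W and W₋^θ is the g-orthogonal complement of W₀ ⊕ (W^ω∩JW^ω) in W^ω. -/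
open Module Submodule
open LinearMap (BilinForm)

namespace LinearMap.BilinForm

variable {K V : Type*} [Field K] [AddCommGroup V] [Module K V] {g : BilinForm K V}

theorem nondegenerate_of_anisotropic (hg : g.toQuadraticMap.Anisotropic) : g.Nondegenerate :=
  ⟨separatingLeft_of_anisotropic hg, fun v hv => hg v (hv v)⟩

theorem disjoint_orthogonal_of_anisotropic (hg : g.toQuadraticMap.Anisotropic)
    (U : Submodule K V) : Disjoint U (g.orthogonal U) :=
  disjoint_def.mpr fun v hvU hv => hg v (hv v hvU)

theorem finrank_inf_orthogonal_add_finrank [FiniteDimensional K V]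
    (hg : g.toQuadraticMap.Anisotropic) {U W : Submodule K V} (hUW : U ≤ W) :
    finrank K ↥(W ⊓ g.orthogonal U) + finrank K U = finrank K W := by
  have hdisj : U ⊓ (W ⊓ g.orthogonal U) = ⊥ :=
    disjoint_iff.mp ((disjoint_orthogonal_of_anisotropic hg U).mono_right inf_le_right)
  have hle := finrank_mono (sup_le hUW (inf_le_left : W ⊓ g.orthogonal U ≤ W))
  have hsum := finrank_sup_add_finrank_inf_eq U (W ⊓ g.orthogonal U)
  have hge := finrank_sup_add_finrank_inf_eq W (g.orthogonal U)
  have hperp := finrank_orthogonal (nondegenerate_of_anisotropic hg) U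
  rw [hdisj, finrank_bot] at hsum
  have hsupV := (W ⊔ g.orthogonal U).finrank_le
  have hUV := U.finrank_le
  omega

end LinearMap.BilinForm

section SquareMinusOne

variable {K V : Type*} [Field K] [AddCommGroup V] [Module K V] {J : V →ₗ[K] V}

theorem Submodule.map_map_eq_self_of_apply_apply_eq_neg (hJ2 : ∀ v, J (J v) = -v)
    (U : Submodule K V) : (U.map J).map J = U := by
  rw [← map_comp, show J ∘ₗ J = -LinearMap.id from LinearMap.ext hJ2, Submodule.map_neg,
    map_id]

theorem Submodule.finrank_map_eq_of_apply_apply_eq_neg [FiniteDimensional K V]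
    (hJ2 : ∀ v, J (J v) = -v) (U : Submodule K V) : finrank K (U.map J) = finrank K U := by
  refine le_antisymm (finrank_map_le J U) ?_
  conv_lhs => rw [← map_map_eq_self_of_apply_apply_eq_neg hJ2 U]
  exact finrank_map_le J (U.map J)

end SquareMinusOne

section Compatible

variable {V : Type*} [AddCommGroup V] [Module ℝ V] {ω : V →ₗ[ℝ] V →ₗ[ℝ] ℝ} {J : V →ₗ[ℝ] V}

/-- `compatibleMetric ω J u v = ω v (J u)`; in this argument order `gOrtho ω J` is its
orthogonal complement by definition. -/
def compatibleMetric (ω : V →ₗ[ℝ] V →ₗ[ℝ] ℝ) (J : V →ₗ[ℝ] V) : BilinForm ℝ V :=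
  (ω.compl₂ J).flip

theorem gOrtho_eq_orthogonal (U : Submodule ℝ V) :
    gOrtho ω J U = (compatibleMetric ω J).orthogonal U :=
  rfl

theorem sympCompl_eq_orthogonal_map (hJ2 : ∀ v, J (J v) = -v) (U : Submodule ℝ V) :
    sympCompl ω U = (compatibleMetric ω J).orthogonal (U.map J) := by
  ext v
  simp [sympCompl, compatibleMetric, hJ2]

theorem compatibleMetric_anisotropic (hJpos : ∀ v, v ≠ 0 → 0 < ω v (J v)) :
    (compatibleMetric ω J).toQuadraticMap.Anisotropic :=
  QuadraticMap.PosDef.anisotropic hJpos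

theorem sympCompl_sup (U U' : Submodule ℝ V) :
    sympCompl ω (U ⊔ U') = sympCompl ω U ⊓ sympCompl ω U' := by
  ext v
  constructor
  · intro hv
    exact ⟨fun w hw => hv w (mem_sup_left hw), fun w hw => hv w (mem_sup_right hw)⟩
  · rintro ⟨hvU, hvU'⟩ w hw
    obtain ⟨u, hu, u', hu', rfl⟩ := mem_sup.mp hw
    rw [map_add, hvU u hu, hvU' u' hu', add_zero]

theorem map_sympCompl (hJ2 : ∀ v, J (J v) = -v) (hJω : ∀ u v, ω (J u) (J v) = ω u v)
    (U : Submodule ℝ V) : (sympCompl ω U).map J = sympCompl ω (U.map J) := by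
  ext v
  constructor
  · rintro ⟨u, hu, rfl⟩ _ ⟨w, hw, rfl⟩
    rw [hJω]
    exact hu w hw
  · intro hv
    refine ⟨-J v, fun w hw => ?_, by rw [map_neg, hJ2, neg_neg]⟩
    have hvJw := hv (J w) (mem_map_of_mem hw)
    rw [← hJω, hJ2] at hvJw
    simpa using hvJw

theorem disjoint_sympCompl_map (hJ2 : ∀ v, J (J v) = -v)
    (hJpos : ∀ v, v ≠ 0 → 0 < ω v (J v)) (U : Submodule ℝ V) :
    Disjoint (sympCompl ω U) (U.map J) := by
  rw [sympCompl_eq_orthogonal_map hJ2]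
  exact (BilinForm.disjoint_orthogonal_of_anisotropic
    (compatibleMetric_anisotropic hJpos) _).symm

theorem sympCompl_inf_map_sympCompl (hJ2 : ∀ v, J (J v) = -v)
    (hJω : ∀ u v, ω (J u) (J v) = ω u v) (W : Submodule ℝ V) :
    sympCompl ω W ⊓ (sympCompl ω W).map J = sympCompl ω (W ⊔ W.map J) := by
  rw [map_sympCompl hJ2 hJω, sympCompl_sup]

variable [FiniteDimensional ℝ V]

theorem finrank_sympCompl_add_finrank (hJ2 : ∀ v, J (J v) = -v)
    (hJpos : ∀ v, v ≠ 0 → 0 < ω v (J v)) (U : Submodule ℝ V) :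
    finrank ℝ (sympCompl ω U) + finrank ℝ U = finrank ℝ V := by
  rw [sympCompl_eq_orthogonal_map hJ2, BilinForm.finrank_orthogonal
    (BilinForm.nondegenerate_of_anisotropic (compatibleMetric_anisotropic hJpos)),
    finrank_map_eq_of_apply_apply_eq_neg hJ2]
  have hUV := U.finrank_le
  omega

theorem finrank_inf_gOrtho_sup_add (hJpos : ∀ v, v ≠ 0 → 0 < ω v (J v))
    {A B W : Submodule ℝ V} (hA : A ≤ W) (hB : B ≤ W) (hAB : Disjoint A B) :
    finrank ℝ ↥(W ⊓ gOrtho ω J (A ⊔ B)) + finrank ℝ A + finrank ℝ B = finrank ℝ W := by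
  have hW := BilinForm.finrank_inf_orthogonal_add_finrank
    (compatibleMetric_anisotropic hJpos) (sup_le hA hB)
  have hsup := finrank_sup_add_finrank_inf_eq A B
  rw [disjoint_iff.mp hAB, finrank_bot] at hsup
  rw [gOrtho_eq_orthogonal]
  omega

end Compatible

theorem totally_real_parts_same_dim_general {V : Type*} [AddCommGroup V] [Module ℝ V]
    [FiniteDimensional ℝ V]
    (ω : V →ₗ[ℝ] V →ₗ[ℝ] ℝ)
    (J : V →ₗ[ℝ] V)
    (hJ2 : ∀ v, J (J v) = -v)
    (hJω : ∀ u v, ω (J u) (J v) = ω u v)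
    (hJpos : ∀ v, v ≠ 0 → 0 < ω v (J v))
    (W : Submodule ℝ V) :
    Module.finrank ℝ
        (W ⊓ gOrtho ω J ((W ⊓ sympCompl ω W) ⊔ (W ⊓ Submodule.map J W)) : Submodule ℝ V) =
      Module.finrank ℝ
        (sympCompl ω W ⊓ gOrtho ω J ((W ⊓ sympCompl ω W) ⊔
          (sympCompl ω W ⊓ Submodule.map J (sympCompl ω W))) : Submodule ℝ V) := by
  have hdisjW : Disjoint (W ⊓ sympCompl ω W) (W ⊓ W.map J) :=
    (disjoint_sympCompl_map hJ2 hJpos W).mono inf_le_right inf_le_right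
  have hdisjWω : Disjoint (W ⊓ sympCompl ω W) (sympCompl ω W ⊓ (sympCompl ω W).map J) := by
    refine (disjoint_sympCompl_map hJ2 hJpos (W.map J)).symm.mono ?_ ?_
    · rw [map_map_eq_self_of_apply_apply_eq_neg hJ2]
      exact inf_le_left
    · rw [← map_sympCompl hJ2 hJω]
      exact inf_le_right
  have hpartW := finrank_inf_gOrtho_sup_add hJpos inf_le_left inf_le_left hdisjW
  have hpartWω := finrank_inf_gOrtho_sup_add hJpos inf_le_right inf_le_left hdisjWω
  have hWω := finrank_sympCompl_add_finrank hJ2 hJpos W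
  have hWJWω := finrank_sympCompl_add_finrank hJ2 hJpos (W ⊔ W.map J)
  rw [← sympCompl_inf_map_sympCompl hJ2 hJω] at hWJWω
  have hWJW := finrank_sup_add_finrank_inf_eq W (W.map J)
  rw [finrank_map_eq_of_apply_apply_eq_neg hJ2] at hWJW
  omega

/-- The totally real symplectic parts of `W` and `W^ω` have the same dimension:
`dim W₊^θ = dim W₋^θ`, where `W₊^θ` is the `g`-orthogonal complement of
`W₀ ⊕ (W ∩ JW)` in `W` and `W₋^θ` is the `g`-orthogonal complement of
`W₀ ⊕ (W^ω ∩ JW^ω)` in `W^ω`. -/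
theorem totally_real_parts_same_dim {V : Type*} [AddCommGroup V] [Module ℝ V]
    [FiniteDimensional ℝ V]
    (ω : V →ₗ[ℝ] V →ₗ[ℝ] ℝ)
    (halt : ∀ v, ω v v = 0)
    (hnd : ∀ v, (∀ w, ω v w = 0) → v = 0)
    (n : ℕ) (hdim : Module.finrank ℝ V = 2 * n)
    (J : V →ₗ[ℝ] V)
    (hJ2 : ∀ v, J (J v) = -v)
    (hJω : ∀ u v, ω (J u) (J v) = ω u v)
    (hJpos : ∀ v, v ≠ 0 → 0 < ω v (J v))
    (W : Submodule ℝ V) :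
    Module.finrank ℝ
        (W ⊓ gOrtho ω J ((W ⊓ sympCompl ω W) ⊔ (W ⊓ Submodule.map J W)) : Submodule ℝ V) =
      Module.finrank ℝ
        (sympCompl ω W ⊓ gOrtho ω J ((W ⊓ sympCompl ω W) ⊔
          (sympCompl ω W ⊓ Submodule.map J (sympCompl ω W))) : Submodule ℝ V) :=
  totally_real_parts_same_dim_general ω J hJ2 hJω hJpos W
end

section
/- Let V be a symplectic vector space with compatible complex structure J and associated inner product g. If W ⊆ V is a totally real subspace (W ∩ JW = {0}) that is also symplectic (W ∩ W^ω = {0}), let P: V → W be g-orthogonal projection and T: W → W given by Tu = P(Ju). Then T is g-skew-adjoint and the self-adjoint operator S = -T² is positive definite on W with all eigenvalues in the open interval (0, 1). -/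
/-- For a totally real symplectic subspace `W` with `g`-orthogonal projection
`P` onto `W` and `T u = P (J u)`, the operator `T` is `g`-skew-adjoint on `W` and
`S = -T²` is positive definite on `W` with all eigenvalues in `(0, 1)`.
Here `g u v = ω u (J v)`. -/
theorem totally_real_symplectic_operator {V : Type*} [AddCommGroup V] [Module ℝ V]
    [FiniteDimensional ℝ V]
    (ω : V →ₗ[ℝ] V →ₗ[ℝ] ℝ)
    (halt : ∀ v, ω v v = 0)
    (hnd : ∀ v, (∀ w, ω v w = 0) → v = 0)
    (J : V →ₗ[ℝ] V)
    (hJ2 : ∀ v, J (J v) = -v)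
    (hJω : ∀ u v, ω (J u) (J v) = ω u v)
    (hJpos : ∀ v, v ≠ 0 → 0 < ω v (J v))
    (W : Submodule ℝ V)
    (htr : W ⊓ Submodule.map J W = ⊥)
    (hsymp : W ⊓ sympCompl ω W = ⊥)
    (P : V →ₗ[ℝ] V)
    (hPrange : LinearMap.range P = W)
    (hPidem : ∀ v, P (P v) = P v)
    (hPsa : ∀ u v, ω (P u) (J v) = ω u (J (P v))) :
    (∀ u ∈ W, ∀ v ∈ W, ω (P (J u)) (J v) = -(ω u (J (P (J v))))) ∧
    (∀ u ∈ W, u ≠ 0 → 0 < ω (-(P (J (P (J u))))) (J u)) ∧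
    (∀ (c : ℝ), ∀ u ∈ W, u ≠ 0 → -(P (J (P (J u)))) = c • u → 0 < c ∧ c < 1) := by
  have skew : ∀ a b, ω a b = -(ω b a) := by
    intro a b
    have h := halt (a + b)
    simp only [map_add, LinearMap.add_apply, halt a, halt b] at h
    linarith
  have Pfix : ∀ u ∈ W, P u = u := by
    intro u hu
    rw [← hPrange] at hu
    obtain ⟨x, rfl⟩ := hu
    exact hPidem x
  have gsymm : ∀ u v, ω u (J v) = ω v (J u) := by
    intro u v
    have h := hJω u (J v)
    rw [hJ2 v] at h
    rw [← h, map_neg, skew (J u) v]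
    ring
  have part1 : ∀ u ∈ W, ∀ v ∈ W, ω (P (J u)) (J v) = -(ω u (J (P (J v)))) := by
    intro u hu v hv
    have h1 : ω (P (J u)) (J v) = ω u v := by
      rw [hPsa (J u) v, Pfix v hv, hJω]
    have h2 : ω u (J (P (J v))) = -(ω u v) := by
      rw [← hPsa u (J v), Pfix u hu, hJ2, map_neg]
    rw [h1, h2, neg_neg]
  have PW : ∀ v, P v ∈ W := by
    intro v
    rw [← hPrange]
    exact LinearMap.mem_range_self P v
  have tne : ∀ u ∈ W, u ≠ 0 → P (J u) ≠ 0 := by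
    intro u hu hne h0
    apply hne
    have hmem : u ∈ sympCompl ω W := by
      intro w hw
      have h := hPsa (J u) w
      rw [h0, Pfix w hw, hJω] at h
      simpa using h.symm
    have hbot : u ∈ W ⊓ sympCompl ω W := ⟨hu, hmem⟩
    rw [hsymp] at hbot
    exact (Submodule.mem_bot ℝ).mp hbot
  have key2 : ∀ u ∈ W, ω (-(P (J (P (J u))))) (J u) = ω (P (J u)) (J (P (J u))) := by
    intro u hu
    have h := part1 (P (J u)) (PW (J u)) u hu
    rw [map_neg, LinearMap.neg_apply, h, neg_neg]
  refine ⟨part1, ?_, ?_⟩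
  · intro u hu hne
    rw [key2 u hu]
    exact hJpos _ (tne u hu hne)
  · intro c u hu hne heq
    have htW : P (J u) ∈ W := PW (J u)
    have guu : 0 < ω u (J u) := hJpos u hne
    have hSval : ω (-(P (J (P (J u))))) (J u) = ω (P (J u)) (J (P (J u))) := key2 u hu
    have hc : ω (-(P (J (P (J u))))) (J u) = c * ω u (J u) := by
      rw [heq, map_smul, LinearMap.smul_apply, smul_eq_mul]
    have hcguu : c * ω u (J u) = ω (P (J u)) (J (P (J u))) := by rw [← hc, hSval]
    have htpos : 0 < ω (P (J u)) (J (P (J u))) := hJpos _ (tne u hu hne)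
    have hcpos : 0 < c := by
      by_contra hle
      push_neg at hle
      nlinarith
    refine ⟨hcpos, ?_⟩
    have hJuW : J u ∉ W := by
      intro h
      have hbot : J u ∈ W ⊓ Submodule.map J W := ⟨h, ⟨u, hu, rfl⟩⟩
      rw [htr] at hbot
      have h0 : J u = 0 := (Submodule.mem_bot ℝ).mp hbot
      apply hne
      have h2 := hJ2 u
      rw [h0, map_zero] at h2
      simpa using h2.symm
    have hdiff : J u - P (J u) ≠ 0 := by
      intro h
      have he : J u = P (J u) := by
        have := sub_eq_zero.mp h
        exact this
      exact hJuW (he ▸ htW)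
    have hpos := hJpos _ hdiff
    have hgtJu : ω (P (J u)) (J (P (J u))) = ω (J u) (J (P (J u))) := by
      have h := hPsa (J u) (P (J u))
      rw [Pfix (P (J u)) htW] at h
      exact h
    have e1 : ω (J u) (J (J u)) = ω u (J u) := hJω u (J u)
    have e3 : ω (P (J u)) (J (J u)) = ω (P (J u)) (J (P (J u))) := by
      rw [← gsymm (J u) (P (J u)), hgtJu]
    have hexp : ω (J u - P (J u)) (J (J u - P (J u)))
        = ω u (J u) - ω (P (J u)) (J (P (J u))) := by
      simp only [map_sub, LinearMap.sub_apply]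
      linarith [e1, e3, hgtJu]
    have hlt : c * ω u (J u) < ω u (J u) := by linarith
    nlinarith
end

section
/- Let P be an orthogonal projection matrix onto a subspace W of ℝ^{2n} and J an orthogonal skew-symmetric matrix with J² = -Id. Then [P, [P, [J, [P, J]]]] = 0 implies W = (W ∩ W^ω) ⊕ (W ∩ JW), i.e., every critical point of the energy function f(P) = ½ Tr([P,J]²) on the Grassmannian is a J-compatible subspace. Conversely, if W = (W ∩ W^ω) ⊕ (W ∩ JW) is an orthogonal direct sum, then [P, [P, [J, [P, J]]]] = 0. -/
/-!
Conjugation by the orthogonal map `J` carries `P = P_W` to `Q = -JPJ = P_{JW}`, and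
`W^ω = (JW)ᗮ`. With `J² = -1` and `P² = P` the gradient expands to `2(2PQP - PQ - QP)`, and for
idempotents `2PQP = PQ + QP` forces `PQP = PQ` and `PQP = QP`, so the gradient vanishes exactly
when `P` and `Q` commute. As `Q` is symmetric, this means that `W = range P` is `Q`-invariant (then
so is `Wᗮ = ker P`), i.e. that `W = (W ⊓ (JW)ᗮ) ⊔ (W ⊓ JW)`.
-/

open RealInnerProductSpace

/-- The symplectic complement with respect to the form `ω u v = ⟪u, J v⟫`. -/
def sympComplE {E : Type*} [NormedAddCommGroup E] [InnerProductSpace ℝ E]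
    (J : E →ₗ[ℝ] E) (W : Submodule ℝ E) : Submodule ℝ E where
  carrier := {v | ∀ w ∈ W, ⟪v, J w⟫ = 0}
  add_mem' := by
    intro a b ha hb w hw
    simp only [Set.mem_setOf_eq] at ha hb
    simp [inner_add_left, ha w hw, hb w hw]
  zero_mem' := by intro w hw; simp
  smul_mem' := by
    intro c a ha w hw
    simp only [Set.mem_setOf_eq] at ha
    simp [real_inner_smul_left, ha w hw]

def ecomm {E : Type*} [AddCommGroup E] [Module ℝ E] (A B : Module.End ℝ E) :
    Module.End ℝ E := A * B - B * A

theorem IsIdempotentElem.commute_iff_two_mul_mul_mul_eq {R : Type*} [Ring R] {p q : R}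
    (hp : IsIdempotentElem p) : Commute p q ↔ 2 * (p * q * p) = p * q + q * p := by
  constructor
  · intro h
    rw [h.eq, mul_assoc, hp.eq, two_mul]
  · intro h
    rw [two_mul] at h
    have hleft : p * q * p = p * q := by
      have := congrArg (p * ·) h
      simp only [mul_add, ← mul_assoc, hp.eq] at this
      exact add_left_cancel (this.trans (add_comm _ _))
    have hright : p * q * p = q * p := by
      have := congrArg (· * p) h
      simp only [add_mul, mul_assoc, hp.eq] at this
      simp only [← mul_assoc] at this
      exact add_left_cancel this
    exact hleft.symm.trans hright

section Gradient

variable {E : Type*} [AddCommGroup E] [Module ℝ E] {P J : Module.End ℝ E}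

theorem ecomm_gradient_eq (hP : IsIdempotentElem P) (hJ : J * J = -1) :
    ecomm P (ecomm P (ecomm J (ecomm P J))) =
      (2 : ℝ) • (2 * (P * -(J * P * J) * P) - (P * -(J * P * J) + -(J * P * J) * P)) := by
  have hJJ : ∀ X, J * (J * X) = -X := fun X => by rw [← mul_assoc, hJ, neg_one_mul]
  have hPP : ∀ X, P * (P * X) = P * X := fun X => by rw [← mul_assoc, hP.eq]
  simp only [ecomm, mul_sub, sub_mul, mul_neg, neg_mul, mul_assoc, hJJ, hPP, hP.eq, hJ, two_mul,
    smul_sub, smul_add, smul_neg, mul_one, two_smul]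
  abel

theorem ecomm_gradient_eq_zero_iff (hP : IsIdempotentElem P) (hJ : J * J = -1) :
    ecomm P (ecomm P (ecomm J (ecomm P J))) = 0 ↔ Commute P (-(J * P * J)) := by
  rw [ecomm_gradient_eq hP hJ, smul_eq_zero_iff_right two_ne_zero, sub_eq_zero,
    hP.commute_iff_two_mul_mul_mul_eq]

end Gradient

namespace Submodule

variable {𝕜 E : Type*} [RCLike 𝕜] [NormedAddCommGroup E] [InnerProductSpace 𝕜 E]
  (U V : Submodule 𝕜 E) [V.HasOrthogonalProjection]

theorem mem_invtSubmodule_starProjection_iff :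
    U ∈ Module.End.invtSubmodule (V.starProjection : E →ₗ[𝕜] E) ↔
      U = (U ⊓ Vᗮ) ⊔ (U ⊓ V) := by
  rw [Module.End.mem_invtSubmodule_iff_forall_mem_of_mem]
  constructor
  · intro hU
    refine le_antisymm (fun u hu => ?_) (sup_le inf_le_left inf_le_left)
    have hPu : V.starProjection u ∈ U ⊓ V := ⟨hU u hu, V.starProjection_apply_mem u⟩
    have hrest : u - V.starProjection u ∈ U ⊓ Vᗮ :=
      ⟨U.sub_mem hu hPu.1, V.sub_starProjection_mem_orthogonal u⟩
    simpa using add_mem_sup hrest hPu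
  · intro hU u hu
    rw [hU] at hu
    obtain ⟨a, ha, b, hb, rfl⟩ := mem_sup.mp hu
    have hPa : V.starProjection a = 0 := (starProjection_apply_eq_zero_iff V).mpr ha.2
    have hPb : V.starProjection b = b := starProjection_eq_self_iff.mpr hb.2
    simpa [hPa, hPb] using hb.1

theorem commute_starProjection_iff [U.HasOrthogonalProjection] :
    Commute (U.starProjection : E →ₗ[𝕜] E) (V.starProjection : E →ₗ[𝕜] E) ↔
      U = (U ⊓ Vᗮ) ⊔ (U ⊓ V) := by
  have hU := ContinuousLinearMap.IsIdempotentElem.toLinearMap U.isIdempotentElem_starProjection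
  have hrange : LinearMap.range (U.starProjection : E →ₗ[𝕜] E) = U := U.range_starProjection
  have hker : LinearMap.ker (U.starProjection : E →ₗ[𝕜] E) = Uᗮ := U.ker_starProjection
  rw [LinearMap.IsIdempotentElem.commute_iff hU, hrange, hker,
    ← mem_invtSubmodule_starProjection_iff, and_iff_left_iff_imp]
  exact V.starProjection_isSymmetric.orthogonalComplement_mem_invtSubmodule

end Submodule

theorem sympComplE_eq_orthogonal_map {E : Type*} [NormedAddCommGroup E] [InnerProductSpace ℝ E]
    (J : E →ₗ[ℝ] E) (W : Submodule ℝ E) : sympComplE J W = (W.map J)ᗮ := by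
  ext v
  simp only [Submodule.mem_orthogonal', Submodule.mem_map, forall_exists_index, and_imp,
    forall_apply_eq_imp_iff₂]
  rfl

section ComplexStructure

variable {E : Type*} [NormedAddCommGroup E] [InnerProductSpace ℝ E] {J : Module.End ℝ E}
  (hJ2 : ∀ v, J (J v) = -v) (hJskew : ∀ u v, ⟪J u, v⟫ = -⟪u, J v⟫)

noncomputable def complexStructureIsometryEquiv : E ≃ₗᵢ[ℝ] E :=
  (LinearEquiv.ofLinearMap J (-J) (by ext v; simp [hJ2]) (by ext v; simp [hJ2])).isometryOfInner
    fun u v => by simp [hJskew, hJ2]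

include hJ2 hJskew in
theorem starProjection_map_complexStructure (W : Submodule ℝ E) [W.HasOrthogonalProjection]
    [(W.map J).HasOrthogonalProjection] :
    ((W.map J).starProjection : Module.End ℝ E) = -(J * W.starProjection * J) := by
  ext v
  set Jₑ := complexStructureIsometryEquiv hJ2 hJskew
  have hJₑ : ∀ x, Jₑ x = J x := fun _ => rfl
  have hJₑ_symm : Jₑ.symm v = -J v := Jₑ.symm_apply_eq.mpr (by rw [hJₑ, map_neg, hJ2, neg_neg])
  have hmap := W.starProjection_map_apply Jₑ v
  rw [hJₑ, hJₑ_symm, map_neg, map_neg] at hmap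
  exact hmap

end ComplexStructure

theorem critical_iff_J_compatible_general {E : Type*} [NormedAddCommGroup E]
    [InnerProductSpace ℝ E] [FiniteDimensional ℝ E]
    (J : Module.End ℝ E)
    (hJ2 : ∀ v, J (J v) = -v)
    (hJskew : ∀ u v, ⟪J u, v⟫ = -⟪u, J v⟫)
    (W : Submodule ℝ E) (P : Module.End ℝ E)
    (hP : ∀ v, P v = (W.orthogonalProjection v : E)) :
    (ecomm P (ecomm P (ecomm J (ecomm P J))) = 0 →
      W = (W ⊓ sympComplE J W) ⊔ (W ⊓ Submodule.map (J : E →ₗ[ℝ] E) W)) ∧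
    ((W = (W ⊓ sympComplE J W) ⊔ (W ⊓ Submodule.map (J : E →ₗ[ℝ] E) W) ∧
        ∀ u ∈ W ⊓ sympComplE J W, ∀ v ∈ W ⊓ Submodule.map (J : E →ₗ[ℝ] E) W,
          ⟪u, v⟫ = 0) →
      ecomm P (ecomm P (ecomm J (ecomm P J))) = 0) := by
  obtain rfl : P = W.starProjection := LinearMap.ext hP
  have hcrit := ecomm_gradient_eq_zero_iff
    (ContinuousLinearMap.IsIdempotentElem.toLinearMap W.isIdempotentElem_starProjection)
    (LinearMap.ext hJ2 : J * J = -1)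
  rw [← starProjection_map_complexStructure hJ2 hJskew, W.commute_starProjection_iff] at hcrit
  rw [hcrit, sympComplE_eq_orthogonal_map]
  exact ⟨id, And.left⟩

/-- For the orthogonal projection `P` onto `W ⊆ ℝ^{2n}` and an orthogonal
skew-symmetric complex structure `J`, vanishing of `[P,[P,[J,[P,J]]]]` (the gradient of
`f(P) = ½Tr([P,J]²)`) implies `W = (W ∩ W^ω) ⊕ (W ∩ JW)`; conversely, if
`W = (W ∩ W^ω) ⊕ (W ∩ JW)` is an orthogonal direct sum then the gradient vanishes. -/
theorem critical_iff_J_compatible {E : Type*} [NormedAddCommGroup E]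
    [InnerProductSpace ℝ E] [FiniteDimensional ℝ E]
    (n : ℕ) (hdim : Module.finrank ℝ E = 2 * n)
    (J : Module.End ℝ E)
    (hJ2 : ∀ v, J (J v) = -v)
    (hJskew : ∀ u v, ⟪J u, v⟫ = -⟪u, J v⟫)
    (W : Submodule ℝ E) (P : Module.End ℝ E)
    (hP : ∀ v, P v = (W.orthogonalProjection v : E)) :
    (ecomm P (ecomm P (ecomm J (ecomm P J))) = 0 →
      W = (W ⊓ sympComplE J W) ⊔ (W ⊓ Submodule.map (J : E →ₗ[ℝ] E) W)) ∧
    ((W = (W ⊓ sympComplE J W) ⊔ (W ⊓ Submodule.map (J : E →ₗ[ℝ] E) W) ∧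
        ∀ u ∈ W ⊓ sympComplE J W, ∀ v ∈ W ⊓ Submodule.map (J : E →ₗ[ℝ] E) W,
          ⟪u, v⟫ = 0) →
      ecomm P (ecomm P (ecomm J (ecomm P J))) = 0) :=
  critical_iff_J_compatible_general J hJ2 hJskew W P hP
end

section
/- Let W be a Lagrangian subspace of a 2n₀-dimensional symplectic vector space V with compatible complex structure J, and P the orthogonal projection onto W. Then [P, J]² = Id, and hence the energy f(P) = ½ Tr([P, J]²) equals n₀. -/
/-!
Lagrangian means `J` maps `W` into `Wᗮ` and `Wᗮ` into `W`, i.e. `J P = (1 - P) J`, so `J`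
anticommutes with the reflection `s = 2P - 1` in `W`. Hence `[P, J] = s J` and
`[P, J]² = -s² J² = 1`, whose trace is `dim V = 2 n₀`.
-/

open RealInnerProductSpace

theorem mul_self_commutator_eq_one {R : Type*} [Ring R] {p j : R} (hp : IsIdempotentElem p)
    (hj : j * j = -1) (hjp : j * p = (1 - p) * j) :
    (p * j - j * p) * (p * j - j * p) = 1 := by
  have hq : (2 * p - 1) * (2 * p - 1) = 1 := by
    calc (2 * p - 1) * (2 * p - 1) = 4 * (p * p) - 4 * p + 1 := by noncomm_ring
      _ = 1 := by rw [hp.eq]; abel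
  have hjq : j * (2 * p - 1) = -((2 * p - 1) * j) := by
    calc j * (2 * p - 1) = 2 * (j * p) - j := by noncomm_ring
      _ = -((2 * p - 1) * j) := by rw [hjp]; noncomm_ring
  calc (p * j - j * p) * (p * j - j * p) = (2 * p - 1) * (j * (2 * p - 1)) * j := by
        rw [hjp]; noncomm_ring
    _ = -((2 * p - 1) * (2 * p - 1)) * (j * j) := by rw [hjq]; noncomm_ring
    _ = 1 := by rw [hq, hj]; noncomm_ring

section

variable {E : Type*} [NormedAddCommGroup E] [InnerProductSpace ℝ E] {J : E →ₗ[ℝ] E}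
  {W : Submodule ℝ E}

theorem map_mem_orthogonal_of_le_sympComplE (hJskew : ∀ u v, ⟪J u, v⟫ = -⟪u, J v⟫)
    (hW : W ≤ sympComplE J W) {w : E} (hw : w ∈ W) : J w ∈ Wᗮ := fun u hu => by
  rw [real_inner_comm, hJskew, hW hw u hu, neg_zero]

theorem map_mem_of_sympComplE_le (hJ2 : ∀ v, J (J v) = -v)
    (hJskew : ∀ u v, ⟪J u, v⟫ = -⟪u, J v⟫) (hW : sympComplE J W ≤ W) {v : E} (hv : v ∈ Wᗮ) :
    J v ∈ W :=
  hW fun w hw => by rw [hJskew, hJ2, inner_neg_right, neg_neg, real_inner_comm, hv w hw]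

theorem starProjection_map_eq_map_sub [W.HasOrthogonalProjection]
    (hJW : ∀ w ∈ W, J w ∈ Wᗮ) (hJWperp : ∀ v ∈ Wᗮ, J v ∈ W) (v : E) :
    W.starProjection (J v) = J (v - W.starProjection v) :=
  W.eq_starProjection_of_mem_orthogonal' (hJWperp _ (W.sub_starProjection_mem_orthogonal v))
    (hJW _ (W.starProjection_apply_mem v)) (by rw [map_sub, sub_add_cancel])

theorem mul_starProjection_eq_one_sub_mul_of_eq_sympComplE [W.HasOrthogonalProjection]
    (hJ2 : ∀ v, J (J v) = -v) (hJskew : ∀ u v, ⟪J u, v⟫ = -⟪u, J v⟫)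
    (hLag : W = sympComplE J W) :
    J * W.starProjection.toLinearMap = (1 - W.starProjection.toLinearMap) * J := by
  ext v
  have hJW (w) (hw : w ∈ W) := map_mem_orthogonal_of_le_sympComplE hJskew hLag.le hw
  have hJWperp (u) (hu : u ∈ Wᗮ) := map_mem_of_sympComplE_le hJ2 hJskew hLag.ge hu
  simp only [Module.End.mul_apply, LinearMap.sub_apply, Module.End.one_apply,
    ContinuousLinearMap.coe_coe, starProjection_map_eq_map_sub hJW hJWperp, map_sub,
    sub_sub_cancel]

end

/-- For a Lagrangian subspace `W` of a `2n₀`-dimensional symplectic vector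
space with compatible complex structure `J` and orthogonal projection `P` onto `W`, one
has `[P, J]² = Id`, hence the energy `f(P) = ½ Tr([P, J]²)` equals `n₀`. -/
theorem lagrangian_energy {E : Type*} [NormedAddCommGroup E]
    [InnerProductSpace ℝ E] [FiniteDimensional ℝ E]
    (n₀ : ℕ) (hdim : Module.finrank ℝ E = 2 * n₀)
    (J : Module.End ℝ E)
    (hJ2 : ∀ v, J (J v) = -v)
    (hJskew : ∀ u v, ⟪J u, v⟫ = -⟪u, J v⟫)
    (W : Submodule ℝ E) (hLag : W = sympComplE J W)
    (P : Module.End ℝ E)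
    (hP : ∀ v, P v = (Submodule.orthogonalProjection W v : E)) :
    ecomm P J * ecomm P J = 1 ∧
      (1 / 2 : ℝ) * LinearMap.trace ℝ E (ecomm P J * ecomm P J) = (n₀ : ℝ) := by
  have hPW : P = W.starProjection.toLinearMap := LinearMap.ext hP
  have hsq : ecomm P J * ecomm P J = 1 := by
    rw [hPW]
    exact mul_self_commutator_eq_one
      (ContinuousLinearMap.IsIdempotentElem.toLinearMap W.isIdempotentElem_starProjection)
      (LinearMap.ext hJ2) (mul_starProjection_eq_one_sub_mul_of_eq_sympComplE hJ2 hJskew hLag)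
  refine ⟨hsq, ?_⟩
  rw [hsq, LinearMap.trace_one, hdim]
  push_cast
  ring
end

section
/- For any orthogonal projection P onto a k-dimensional subspace of ℝ^{2n} and J orthogonal skew-symmetric with J² = -Id, the energy satisfies f(P) = ½ Tr([P,J]²) = Tr(P) + Tr(PJPJ) = k + Tr(PJPJ), and 0 ≤ f(P) ≤ min(k, 2n - k). -/
open Matrix

lemma trace_transpose_mul_self_nonneg' {m : ℕ} (A : Matrix (Fin m) (Fin m) ℝ) :
    0 ≤ (Aᵀ * A).trace := by
  rw [Matrix.trace]
  apply Finset.sum_nonneg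
  intro i _
  simp only [Matrix.diag_apply, Matrix.mul_apply, Matrix.transpose_apply]
  exact Finset.sum_nonneg fun j _ => mul_self_nonneg _

lemma aux_energy {m : ℕ} (P J : Matrix (Fin m) (Fin m) ℝ)
    (hPsymm : Pᵀ = P) (hPidem : P * P = P)
    (hJskew : Jᵀ = -J) (hJ2 : J * J = -1) :
    (1 / 2 : ℝ) * ((P * J - J * P) * (P * J - J * P)).trace
        = P.trace + (P * J * P * J).trace ∧ (P * J * P * J).trace ≤ 0 := by
  constructor
  · have expand : (P * J - J * P) * (P * J - J * P)
        = P * J * P * J + J * (P * J * P) - (P * (J * J) * P + J * (P * P) * J) := by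
      noncomm_ring
    have h1 : (J * (P * J * P)).trace = (P * J * P * J).trace := by
      rw [Matrix.trace_mul_comm]
    have h2 : (P * (J * J) * P).trace = -P.trace := by
      rw [hJ2]; simp [hPidem]
    have h3 : (J * (P * P) * J).trace = -P.trace := by
      rw [hPidem, Matrix.trace_mul_comm, ← mul_assoc, hJ2]
      simp
    rw [expand, Matrix.trace_sub, Matrix.trace_add, Matrix.trace_add, h1, h2, h3]
    ring
  · have hM : (P * J * P)ᵀ = -(P * J * P) := by
      simp [Matrix.transpose_mul, hPsymm, hJskew, mul_assoc]
    have e1 : (P * J * P) * (P * J * P) = (P * J * P * J) * P := by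
      rw [show (P * J * P) * (P * J * P) = P * J * (P * P) * J * P by noncomm_ring, hPidem]
    have e2 : P * (P * J * P * J) = P * J * P * J := by
      rw [show P * (P * J * P * J) = (P * P) * J * P * J by noncomm_ring, hPidem]
    have heq : (P * J * P * J).trace = ((P * J * P) * (P * J * P)).trace := by
      rw [e1, Matrix.trace_mul_comm (P * J * P * J) P, e2]
    have := trace_transpose_mul_self_nonneg' (P * J * P)
    rw [hM] at this
    simp only [Matrix.neg_mul, Matrix.trace_neg] at this
    rw [heq]; linarith

/-- For an orthogonal projection `P` of rank `k` on `ℝ^{2n}` and an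
orthogonal skew-symmetric `J` with `J² = -Id`, the energy satisfies
`f(P) = ½ Tr([P,J]²) = Tr P + Tr(PJPJ) = k + Tr(PJPJ)` and `0 ≤ f(P) ≤ min(k, 2n-k)`. -/
theorem energy_trace_formula_and_bounds {n k : ℕ} (hk : k ≤ 2 * n)
    (P J : Matrix (Fin (2 * n)) (Fin (2 * n)) ℝ)
    (hPsymm : Pᵀ = P) (hPidem : P * P = P) (hPrank : P.trace = k)
    (hJskew : Jᵀ = -J) (hJ2 : J * J = -1) :
    (1 / 2 : ℝ) * ((P * J - J * P) * (P * J - J * P)).trace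
        = P.trace + (P * J * P * J).trace ∧
    (1 / 2 : ℝ) * ((P * J - J * P) * (P * J - J * P)).trace
        = (k : ℝ) + (P * J * P * J).trace ∧
    0 ≤ (1 / 2 : ℝ) * ((P * J - J * P) * (P * J - J * P)).trace ∧
    (1 / 2 : ℝ) * ((P * J - J * P) * (P * J - J * P)).trace
        ≤ min (k : ℝ) ((2 * n : ℝ) - (k : ℝ)) := by
  obtain ⟨heq, hle⟩ := aux_energy P J hPsymm hPidem hJskew hJ2
  refine ⟨heq, by rw [heq, hPrank], ?_, ?_⟩
  · -- C is symmetric, so Tr(C²) = Tr(CᵀC) ≥ 0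
    have hC : (P * J - J * P)ᵀ = P * J - J * P := by
      simp only [Matrix.transpose_sub, Matrix.transpose_mul, hPsymm, hJskew,
        Matrix.neg_mul, Matrix.mul_neg]
      abel
    have := trace_transpose_mul_self_nonneg' (P * J - J * P)
    rw [hC] at this
    linarith
  · rw [le_min_iff]
    constructor
    · rw [heq, hPrank]; linarith
    · -- apply aux to Q = 1 - P
      set Q : Matrix (Fin (2 * n)) (Fin (2 * n)) ℝ := 1 - P with hQ
      have hQs : Qᵀ = Q := by simp [hQ, Matrix.transpose_sub, hPsymm]
      have hQi : Q * Q = Q := by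
        simp only [hQ, sub_mul, mul_sub, one_mul, mul_one, hPidem]; noncomm_ring
      obtain ⟨heq', hle'⟩ := aux_energy Q J hQs hQi hJskew hJ2
      have hcomm : Q * J - J * Q = -(P * J - J * P) := by
        rw [hQ]; noncomm_ring
      have hsq : (Q * J - J * Q) * (Q * J - J * Q) = (P * J - J * P) * (P * J - J * P) := by
        rw [hcomm]; noncomm_ring
      rw [hsq] at heq'
      have hQtr : Q.trace = (2 * n : ℝ) - k := by
        simp [hQ, Matrix.trace_sub, Matrix.trace_one, hPrank]
      rw [heq', hQtr]
      linarith
end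

section
/- Let ξ be an element of the symplectic Lie algebra sp(2n, ℝ) and P a symmetric idempotent matrix. Define the curve P(t) as the orthogonal projection onto e^{tξ}·W where W = range(P). Then the derivative at t = 0 is Ṗ(0) = (Id - P)ξP + Pξᵀ(Id - P), which equals ½[P,[P, ξ + ξᵀ]] - ½[P, ξ - ξᵀ]. -/
open Matrix

attribute [local instance] Matrix.linftyOpNormedRing Matrix.linftyOpNormedAlgebra

/-- The matrix commutator. -/
def mcomm {m : Type*} [Fintype m] (A B : Matrix m m ℝ) : Matrix m m ℝ := A * B - B * A

/-- The standard complex structure `J = [[0, -1], [1, 0]]` on `ℝ^{2n} = ℝⁿ ⊕ ℝⁿ`. -/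
def stdJ (n : ℕ) : Matrix (Fin n ⊕ Fin n) (Fin n ⊕ Fin n) ℝ :=
  Matrix.fromBlocks 0 (-1) 1 0

/-!
Differentiate at `t = 0` the two identities `P t * P t = P t` and
`P t * (exp (t • ξ) * P 0) = exp (t • ξ) * P 0`; the second holds because `exp (t • ξ) * P 0`
maps into `range (P t)`, on which the idempotent `P t` acts as the identity. With `Q = P 0` they
give `Ṗ = Ṗ Q + Q Ṗ` and `Ṗ Q = (1 - Q) ξ Q`, and since `Ṗ` and `Q` are symmetric,
`Q Ṗ = (Ṗ Q)ᵀ = Q ξᵀ (1 - Q)`. The commutator form is then an identity valid for any idempotent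
`Q`.
-/

theorem Matrix.mul_eq_right_of_range_le {m R : Type*} [Fintype m] [CommRing R]
    {A B : Matrix m m R} (hA : A * A = A)
    (h : LinearMap.range B.mulVecLin ≤ LinearMap.range A.mulVecLin) : A * B = B :=
  ext_iff_mulVec.2 fun v => by
    obtain ⟨w, hw⟩ := h ⟨v, rfl⟩
    simp only [mulVecLin_apply] at hw
    rw [← mulVec_mulVec, ← hw, mulVec_mulVec, hA]

theorem Matrix.eq_compl_mul_mul_add_mul_transpose_mul_compl {m R : Type*} [Fintype m]
    [DecidableEq m] [CommRing R] {Q D ξ : Matrix m m R} (hQ : Qᵀ = Q) (hD : Dᵀ = D)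
    (hleib : D = D * Q + Q * D) (hDQ : D * Q + Q * ξ * Q = ξ * Q) :
    D = (1 - Q) * ξ * Q + Q * ξᵀ * (1 - Q) := by
  have hQD : Q * D = (D * Q)ᵀ := by rw [transpose_mul, hD, hQ]
  rw [hleib, hQD, eq_sub_of_add_eq hDQ]
  simp only [transpose_sub, transpose_mul, hQ, Matrix.sub_mul, Matrix.mul_sub, Matrix.one_mul,
    Matrix.mul_one, Matrix.mul_assoc]

theorem compl_mul_mul_add_mul_mul_compl_eq_mcomm {m : Type*} [Fintype m] [DecidableEq m]
    {Q : Matrix m m ℝ} (hQ : Q * Q = Q) (X Y : Matrix m m ℝ) :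
    (1 - Q) * X * Q + Q * Y * (1 - Q) =
      (1 / 2 : ℝ) • mcomm Q (mcomm Q (X + Y)) - (1 / 2 : ℝ) • mcomm Q (X - Y) := by
  have hXQQ : X * Q * Q = X * Q := by rw [Matrix.mul_assoc, hQ]
  have hYQQ : Y * Q * Q = Y * Q := by rw [Matrix.mul_assoc, hQ]
  simp only [mcomm, Matrix.mul_sub, Matrix.sub_mul, Matrix.mul_add, Matrix.add_mul,
    Matrix.mul_one, Matrix.one_mul, ← Matrix.mul_assoc, hQ, hXQQ, hYQQ]
  module

section ProjectionCurve

variable {m : Type*} [Fintype m] [DecidableEq m]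

theorem hasDerivAt_matrix_iff {A : ℝ → Matrix m m ℝ} {A' : Matrix m m ℝ} {t : ℝ} :
    HasDerivAt A A' t ↔ ∀ i j, HasDerivAt (fun s => A s i j) (A' i j) t := by
  let e : (m → m → ℝ) ≃L[ℝ] Matrix m m ℝ := (ofLinearEquiv ℝ).toContinuousLinearEquiv
  have key : HasDerivAt A A' t ↔ HasDerivAt (fun s => e.symm (A s)) (e.symm A') t := by
    refine ⟨fun h => e.symm.hasFDerivAt.comp_hasDerivAt t h, fun h => ?_⟩
    have := e.hasFDerivAt.comp_hasDerivAt t h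
    simp only [Function.comp_def] at this
    exact this
  rw [key, hasDerivAt_pi]
  exact forall_congr' fun i => hasDerivAt_pi

theorem HasDerivAt.matrix_transpose {A : ℝ → Matrix m m ℝ} {A' : Matrix m m ℝ} {t : ℝ}
    (h : HasDerivAt A A' t) : HasDerivAt (fun s => (A s)ᵀ) A'ᵀ t :=
  hasDerivAt_matrix_iff.2 fun i j => hasDerivAt_matrix_iff.1 h j i

theorem hasDerivAt_exp_smul_zero (ξ : Matrix m m ℝ) :
    HasDerivAt (fun t : ℝ => NormedSpace.exp (t • ξ)) ξ 0 := by
  have h := hasDerivAt_exp_smul_const (𝕂 := ℝ) ξ 0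
  rw [zero_smul, NormedSpace.exp_zero, one_mul] at h
  exact h

theorem HasDerivAt.eq_mul_add_mul_of_idempotent {P : ℝ → Matrix m m ℝ} {D : Matrix m m ℝ}
    {t : ℝ} (hP : HasDerivAt P D t) (hidem : ∀ s, P s * P s = P s) : D = D * P t + P t * D :=
  (hP.congr_of_eventuallyEq (.of_forall hidem)).unique (hP.mul hP)

theorem mul_exp_smul_mul_eq_of_range_eq_map {P : ℝ → Matrix m m ℝ} {ξ : Matrix m m ℝ}
    (hidem : ∀ t, P t * P t = P t)
    (hrange : ∀ t, LinearMap.range (P t).mulVecLin =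
      Submodule.map (NormedSpace.exp (t • ξ)).mulVecLin (LinearMap.range (P 0).mulVecLin))
    (t : ℝ) : P t * (NormedSpace.exp (t • ξ) * P 0) = NormedSpace.exp (t • ξ) * P 0 :=
  mul_eq_right_of_range_le (hidem t) (by rw [hrange t, mulVecLin_mul, LinearMap.range_comp])

theorem deriv_mul_add_eq_of_mul_eq {P E : ℝ → Matrix m m ℝ} {D ξ : Matrix m m ℝ}
    (hP : HasDerivAt P D 0) (hE : HasDerivAt E ξ 0) (hE0 : E 0 = 1)
    (hinv : ∀ t, P t * (E t * P 0) = E t * P 0) : D * P 0 + P 0 * ξ * P 0 = ξ * P 0 := by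
  have hEP := hE.mul_const (P 0)
  have h := (hEP.congr_of_eventuallyEq (.of_forall hinv)).unique (hP.mul hEP)
  rw [hE0, Matrix.one_mul, ← Matrix.mul_assoc] at h
  exact h.symm

end ProjectionCurve

theorem fundamental_vector_field_formula_general {n : ℕ}
    (ξ : Matrix (Fin n ⊕ Fin n) (Fin n ⊕ Fin n) ℝ)
    (P : ℝ → Matrix (Fin n ⊕ Fin n) (Fin n ⊕ Fin n) ℝ)
    (hPsymm : ∀ t, (P t)ᵀ = P t) (hPidem : ∀ t, P t * P t = P t)
    (hPrange : ∀ t, LinearMap.range (P t).mulVecLin =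
      Submodule.map (NormedSpace.exp (t • ξ)).mulVecLin (LinearMap.range (P 0).mulVecLin))
    (D : Matrix (Fin n ⊕ Fin n) (Fin n ⊕ Fin n) ℝ)
    (hderiv : ∀ i j, HasDerivAt (fun t => P t i j) (D i j) 0) :
    D = (1 - P 0) * ξ * P 0 + P 0 * ξᵀ * (1 - P 0) ∧
    D = (1 / 2 : ℝ) • mcomm (P 0) (mcomm (P 0) (ξ + ξᵀ))
          - (1 / 2 : ℝ) • mcomm (P 0) (ξ - ξᵀ) := by
  have hP : HasDerivAt P D 0 := hasDerivAt_matrix_iff.2 hderiv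
  have hDsymm : Dᵀ = D := by
    have hPT := hP.matrix_transpose
    simp only [hPsymm] at hPT
    exact hPT.unique hP
  have hDQ := deriv_mul_add_eq_of_mul_eq hP (hasDerivAt_exp_smul_zero ξ) (by simp)
    (mul_exp_smul_mul_eq_of_range_eq_map hPidem hPrange)
  have hD := eq_compl_mul_mul_add_mul_transpose_mul_compl (hPsymm 0) hDsymm
    (hP.eq_mul_add_mul_of_idempotent hPidem) hDQ
  exact ⟨hD, hD.trans (compl_mul_mul_add_mul_mul_compl_eq_mcomm (hPidem 0) ξ ξᵀ)⟩

/-- For `ξ ∈ sp(2n, ℝ)` and `P t` the orthogonal projection onto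
`e^{tξ}·W` where `W = range (P 0)`, the derivative at `t = 0` is
`Ṗ(0) = (Id - P)ξP + Pξᵀ(Id - P) = ½[P,[P, ξ + ξᵀ]] - ½[P, ξ - ξᵀ]`. -/
theorem fundamental_vector_field_formula {n : ℕ}
    (ξ : Matrix (Fin n ⊕ Fin n) (Fin n ⊕ Fin n) ℝ)
    (hξ : ξ * stdJ n + stdJ n * ξᵀ = 0)
    (P : ℝ → Matrix (Fin n ⊕ Fin n) (Fin n ⊕ Fin n) ℝ)
    (hPsymm : ∀ t, (P t)ᵀ = P t) (hPidem : ∀ t, P t * P t = P t)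
    (hPrange : ∀ t, LinearMap.range (P t).mulVecLin =
      Submodule.map (NormedSpace.exp (t • ξ)).mulVecLin (LinearMap.range (P 0).mulVecLin))
    (D : Matrix (Fin n ⊕ Fin n) (Fin n ⊕ Fin n) ℝ)
    (hderiv : ∀ i j, HasDerivAt (fun t => P t i j) (D i j) 0) :
    D = (1 - P 0) * ξ * P 0 + P 0 * ξᵀ * (1 - P 0) ∧
    D = (1 / 2 : ℝ) • mcomm (P 0) (mcomm (P 0) (ξ + ξᵀ))
          - (1 / 2 : ℝ) • mcomm (P 0) (ξ - ξᵀ) :=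
  fundamental_vector_field_formula_general ξ P hPsymm hPidem hPrange D hderiv
end

section
/- Let P be a symmetric idempotent 2n×2n matrix and J the standard orthogonal complex structure. Then Z := -[J, [P, J]] is symmetric and satisfies ZJ + JZ = 0 (so Z lies in the symmetric part of sp(2n, ℝ)), and [P, [P, Z]] = -[P, [P, [J, [P, J]]]]; hence the negative gradient of the energy f(P) = ½Tr([P,J]²) at P is the value at P of the fundamental vector field of the symplectic generator Z. -/
open Matrix

lemma stdJ_transpose (n : ℕ) : (stdJ n)ᵀ = -stdJ n := by
  simp [stdJ, Matrix.fromBlocks_transpose, Matrix.fromBlocks_neg]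

lemma stdJ_sq (n : ℕ) : stdJ n * stdJ n = -1 := by
  simp [stdJ, Matrix.fromBlocks_multiply, ← Matrix.fromBlocks_one,
    Matrix.fromBlocks_neg]

/-- For a symmetric idempotent `P` and the standard complex structure `J`,
the matrix `Z := -[J, [P, J]]` is symmetric, lies in `sp(2n, ℝ)` (i.e. `ZJ + JZᵀ = 0`),
and `[P, [P, Z]] = -[P, [P, [J, [P, J]]]]`: the negative gradient of the energy
`f(P) = ½Tr([P,J]²)` at `P` is the fundamental vector field of the generator `Z` at `P`. -/
theorem gradient_is_symplectic_fundamental_field {n : ℕ}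
    (P : Matrix (Fin n ⊕ Fin n) (Fin n ⊕ Fin n) ℝ)
    (hPsymm : Pᵀ = P) (hPidem : P * P = P) :
    (-(mcomm (stdJ n) (mcomm P (stdJ n))))ᵀ = -(mcomm (stdJ n) (mcomm P (stdJ n))) ∧
    (-(mcomm (stdJ n) (mcomm P (stdJ n)))) * stdJ n
        + stdJ n * (-(mcomm (stdJ n) (mcomm P (stdJ n))))ᵀ = 0 ∧
    mcomm P (mcomm P (-(mcomm (stdJ n) (mcomm P (stdJ n)))))
        = -(mcomm P (mcomm P (mcomm (stdJ n) (mcomm P (stdJ n))))) := by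
  have hJT := stdJ_transpose n
  have hJ2 := stdJ_sq n
  have hsymm : (-(mcomm (stdJ n) (mcomm P (stdJ n))))ᵀ
      = -(mcomm (stdJ n) (mcomm P (stdJ n))) := by
    simp only [mcomm, transpose_neg, transpose_sub, transpose_mul, hJT, hPsymm]
    noncomm_ring
  refine ⟨hsymm, ?_, ?_⟩
  · rw [hsymm]
    have h2 : ∀ A : Matrix (Fin n ⊕ Fin n) (Fin n ⊕ Fin n) ℝ,
        stdJ n * (stdJ n * A) = -A := fun A => by rw [← mul_assoc, hJ2, neg_one_mul]
    simp only [mcomm]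
    simp only [mul_sub, sub_mul, neg_sub, mul_assoc, hJ2, h2, mul_neg_one,
      mul_neg, neg_neg, neg_mul, one_mul, mul_one]
    abel
  · simp only [mcomm]
    noncomm_ring
end
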